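/- arXiv:2003.04776 — 2 statements merged into one kernel-verified Lean document; each statement's English description precedes it below -/
import Mathlib

section
/- Let S and T be real m×m matrices, β > 0, a, b ∈ ℝ, B = [[a, b],[-b, a]], D = β·I₂. The map Z ↦ S Z D - T Z B on ℝ^{m×2} is bijective (so that the equation S Z D - T Z B = Y has a unique solution Z for every Y ∈ ℝ^{m×2}) if and only if det(β·S - (a + i b)·T) ≠ 0, the determinant being computed over ℂ after complexifying S and T. -/
/-!
Reading the two columns of a real `n × 2` matrix `Z` as real and imaginary parts identifies
`Z` with a vector `z ∈ ℂⁿ`. Left multiplication by a real matrix commutes with this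
identification, right multiplication by `β I₂` becomes multiplication by `β`, and right
multiplication by `[[a, b], [-b, a]]` becomes multiplication by `a + i b`. Hence the operator
`Z ↦ S Z D - T Z B` is conjugate to `z ↦ (β S - (a + i b) T) z`, which is bijective exactly
when its determinant does not vanish.
-/

open Matrix

namespace Matrix

variable {l n : Type*} [Fintype n]

theorem mulVec_bijective_iff_det_ne_zero {K : Type*} [Field K] [DecidableEq n]
    {A : Matrix n n K} : Function.Bijective A.mulVec ↔ A.det ≠ 0 := by
  rw [← isUnit_iff_ne_zero, ← isUnit_iff_isUnit_det]
  exact ⟨fun h => mulVec_injective_iff_isUnit.mp h.injective,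
    fun h => ⟨mulVec_injective_iff_isUnit.mpr h, mulVec_surjective_iff_isUnit.mpr h⟩⟩

def rowsToComplex : Matrix l (Fin 2) ℝ ≃ₗ[ℝ] (l → ℂ) where
  toFun Z i := ⟨Z i 0, Z i 1⟩
  invFun z := Matrix.of fun i j => ![(z i).re, (z i).im] j
  map_add' Z W := by ext i; apply Complex.ext <;> simp
  map_smul' c Z := by ext i; apply Complex.ext <;> simp
  left_inv Z := by ext i j; fin_cases j <;> simp
  right_inv z := by ext; simp

@[simp]
theorem rowsToComplex_apply (Z : Matrix l (Fin 2) ℝ) (i : l) :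
    rowsToComplex Z i = ⟨Z i 0, Z i 1⟩ :=
  rfl

theorem rowsToComplex_mul_left (S : Matrix l n ℝ) (Z : Matrix n (Fin 2) ℝ) :
    rowsToComplex (S * Z) = S.map Complex.ofReal *ᵥ rowsToComplex Z := by
  ext i; apply Complex.ext <;> simp [mulVec, dotProduct, mul_apply, Complex.re_sum, Complex.im_sum]

theorem rowsToComplex_mul_rotation (Z : Matrix l (Fin 2) ℝ) (a b : ℝ) :
    rowsToComplex (Z * !![a, b; -b, a]) = (↑a + Complex.I * ↑b) • rowsToComplex Z := by
  ext i; apply Complex.ext <;> simp [mul_apply, Fin.sum_univ_two] <;> ring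

end Matrix

theorem two_column_sylvester_like_operator_bijective_iff_det_ne_zero_general
    {m : ℕ} (S T : Matrix (Fin m) (Fin m) ℝ)
    (a b β : ℝ)
    (B D : Matrix (Fin 2) (Fin 2) ℝ)
    (hB : B = !![a, b; -b, a]) (hD : D = β • (1 : Matrix (Fin 2) (Fin 2) ℝ)) :
    Function.Bijective (fun Z : Matrix (Fin m) (Fin 2) ℝ => S * Z * D - T * Z * B) ↔
      (β • S.map Complex.ofReal - (↑a + Complex.I * ↑b) • T.map Complex.ofReal).det ≠ 0 := by
  set M := β • S.map Complex.ofReal - (↑a + Complex.I * ↑b) • T.map Complex.ofReal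
  have conj : (fun Z : Matrix (Fin m) (Fin 2) ℝ => S * Z * D - T * Z * B) =
      rowsToComplex.symm ∘ M.mulVec ∘ rowsToComplex := by
    funext Z
    apply rowsToComplex.injective
    rw [Function.comp_apply, Function.comp_apply, LinearEquiv.apply_symm_apply, hB, hD,
      Matrix.mul_smul, Matrix.mul_one, Matrix.mul_assoc T, map_sub, map_smul,
      rowsToComplex_mul_left, rowsToComplex_mul_left, rowsToComplex_mul_rotation]
    simp [M, sub_mulVec, mulVec_smul, smul_mulVec]
  rw [conj, EquivLike.comp_bijective, EquivLike.bijective_comp, mulVec_bijective_iff_det_ne_zero]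

/-- With `D = β I₂` and `B = [[a,b],[-b,a]]`, the map
`Z ↦ S Z D - T Z B` on real `m × 2` matrices is bijective iff
`det(β S - (a + i b) T) ≠ 0` over `ℂ`. -/
theorem two_column_sylvester_like_operator_bijective_iff_det_ne_zero
    {m : ℕ} (S T : Matrix (Fin m) (Fin m) ℝ)
    (a b β : ℝ) (hβ : 0 < β)
    (B D : Matrix (Fin 2) (Fin 2) ℝ)
    (hB : B = !![a, b; -b, a]) (hD : D = β • (1 : Matrix (Fin 2) (Fin 2) ℝ)) :
    Function.Bijective (fun Z : Matrix (Fin m) (Fin 2) ℝ => S * Z * D - T * Z * B) ↔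
      (β • S.map Complex.ofReal - (↑a + Complex.I * ↑b) • T.map Complex.ofReal).det ≠ 0 :=
  two_column_sylvester_like_operator_bijective_iff_det_ne_zero_general S T a b β B D hB hD
end

section
/- Let Ω > 0, let X ∈ ℝ^{m×n} and B ∈ ℝ^{n×n} satisfy ‖X‖∞ ≤ Ω and ‖B‖∞ ≤ Ω, and let α ∈ ℝ with 0 < α ≤ 1. Set s = ‖X‖∞·‖B‖∞, γ = min(1, Ω/s) if s > 0 and γ = 1 if s = 0, and Y = (γ·X)·B and β = α·γ. Then 0 < β ≤ 1, ‖Y‖∞ ≤ Ω, and β⁻¹·Y = (α⁻¹·X)·B. -/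
open Matrix

attribute [local instance] Matrix.linftyOpNormedAddCommGroup
attribute [local instance] Matrix.linftyOpNormedSpace

/-- The factor `γ` of `ProtectUpdate(‖X‖∞, ‖B‖∞)`, with `s = ‖X‖∞ ‖B‖∞`. -/
noncomputable def protectUpdateScale (Ω s : ℝ) : ℝ := if 0 < s then min 1 (Ω / s) else 1

section protectUpdateScale

variable {Ω s : ℝ}

lemma protectUpdateScale_pos (hΩ : 0 < Ω) : 0 < protectUpdateScale Ω s := by
  unfold protectUpdateScale
  split_ifs with hs
  · exact lt_min one_pos (div_pos hΩ hs)
  · exact one_pos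

lemma protectUpdateScale_le_one : protectUpdateScale Ω s ≤ 1 := by
  unfold protectUpdateScale
  split_ifs
  · exact min_le_left _ _
  · exact le_rfl

lemma protectUpdateScale_mul_le {t : ℝ} (hΩ : 0 ≤ Ω) (ht : 0 ≤ t) (hts : t ≤ s) :
    protectUpdateScale Ω s * t ≤ Ω := by
  unfold protectUpdateScale
  split_ifs with hs
  · calc min 1 (Ω / s) * t ≤ Ω / s * s :=
          mul_le_mul (min_le_right _ _) hts ht (div_nonneg hΩ hs.le)
      _ = Ω := div_mul_cancel₀ Ω hs.ne'
  · linarith [not_lt.mp hs]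

end protectUpdateScale

lemma Matrix.mul_inv_smul_smul_mul {K l m n : Type*} [Field K] [Fintype m]
    (X : Matrix l m K) (B : Matrix m n K) {a c : K} (hc : c ≠ 0) :
    (a * c)⁻¹ • ((c • X) * B) = (a⁻¹ • X) * B := by
  rw [Matrix.smul_mul, Matrix.smul_mul, smul_smul, mul_inv, mul_assoc, inv_mul_cancel₀ hc,
    mul_one]

theorem robust_right_update_correct_general
    {m n : ℕ} (Ω : ℝ) (hΩ : 0 < Ω)
    (X : Matrix (Fin m) (Fin n) ℝ) (B : Matrix (Fin n) (Fin n) ℝ)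
    (α : ℝ) (hα0 : 0 < α) (hα1 : α ≤ 1)
    (s : ℝ) (hs : s = ‖X‖ * ‖B‖)
    (γ : ℝ) (hγ : γ = if 0 < s then min 1 (Ω / s) else 1)
    (Y : Matrix (Fin m) (Fin n) ℝ) (hY : Y = (γ • X) * B)
    (β : ℝ) (hβ : β = α * γ) :
    (0 < β ∧ β ≤ 1) ∧ ‖Y‖ ≤ Ω ∧ β⁻¹ • Y = (α⁻¹ • X) * B := by
  change γ = protectUpdateScale Ω s at hγ
  have hγ0 : 0 < γ := hγ ▸ protectUpdateScale_pos hΩ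
  have hγ1 : γ ≤ 1 := hγ ▸ protectUpdateScale_le_one
  have hXB : ‖X * B‖ ≤ s := hs ▸ Matrix.linfty_opNorm_mul X B
  have hYnorm : ‖Y‖ = γ * ‖X * B‖ := by
    rw [hY, Matrix.smul_mul, norm_smul, Real.norm_of_nonneg hγ0.le]
  subst hβ
  refine ⟨⟨mul_pos hα0 hγ0, mul_le_one₀ hα1 hγ0.le hγ1⟩, ?_, ?_⟩
  · rw [hYnorm, hγ]
    exact protectUpdateScale_mul_le hΩ.le (norm_nonneg _) hXB
  · rw [hY]
    exact Matrix.mul_inv_smul_smul_mul X B hγ0.ne'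

/-- Robust right update (Algorithm 2): with `‖X‖∞ ≤ Ω`, `‖B‖∞ ≤ Ω`,
`0 < α ≤ 1`, `γ = ProtectUpdate` scaling for `s = ‖X‖∞ ‖B‖∞`, `Y = (γ X) B` and
`β = α γ`, we get `0 < β ≤ 1`, `‖Y‖∞ ≤ Ω`, and `β⁻¹ Y = (α⁻¹ X) B`. -/
theorem robust_right_update_correct
    {m n : ℕ} (Ω : ℝ) (hΩ : 0 < Ω)
    (X : Matrix (Fin m) (Fin n) ℝ) (B : Matrix (Fin n) (Fin n) ℝ)
    (hX : ‖X‖ ≤ Ω) (hB : ‖B‖ ≤ Ω)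
    (α : ℝ) (hα0 : 0 < α) (hα1 : α ≤ 1)
    (s : ℝ) (hs : s = ‖X‖ * ‖B‖)
    (γ : ℝ) (hγ : γ = if 0 < s then min 1 (Ω / s) else 1)
    (Y : Matrix (Fin m) (Fin n) ℝ) (hY : Y = (γ • X) * B)
    (β : ℝ) (hβ : β = α * γ) :
    (0 < β ∧ β ≤ 1) ∧ ‖Y‖ ≤ Ω ∧ β⁻¹ • Y = (α⁻¹ • X) * B :=
  robust_right_update_correct_general Ω hΩ X B α hα0 hα1 s hs γ hγ Y hY β hβ
end
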